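/- arXiv:1811.06716 — 2 statements merged into one kernel-verified Lean document; each statement's English description precedes it below -/
import Mathlib

section
/- A chain of cycles has cutwidth at most 2; that is, if a graph G is a union of cycles Z_1,…,Z_n with distinguished vertices a_j, b_j ∈ Z_j such that Z_i ∩ Z_j = ∅ whenever |i−j| > 1 and Z_{j−1} ∩ Z_j = {b_{j−1}} = {a_j} for every j = 2,…,n, then there is a bijective numbering of the vertices of G by 1,…,N such that for every i = 1,…,N−1 at most 2 edges (u,v) satisfy u ≤ i < v. -/
/-- The number of edges `(u,v)` of `G` with `u ≤ i < v` in the numbering `f`. -/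
noncomputable def crossCount {V : Type} (G : SimpleGraph V) {N : ℕ} (f : V ≃ Fin N) (i : ℕ) : ℕ :=
  {p : V × V | G.Adj p.1 p.2 ∧ (f p.1 : ℕ) ≤ i ∧ i < (f p.2 : ℕ)}.ncard

/-- `G` has cutwidth at most `k`: some bijective numbering of the vertices has at most `k`
edges crossing every position. -/
def CutwidthLE {V : Type} [Fintype V] (G : SimpleGraph V) (k : ℕ) : Prop :=
  ∃ f : V ≃ Fin (Fintype.card V), ∀ i : ℕ, crossCount G f i ≤ k

/-- The cycle through the points `c 0, c 1, …, c (m-1)` (in this cyclic order). -/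
def cycleOn {W : Type} {m : ℕ} (c : Fin m → W) : SimpleGraph W :=
  SimpleGraph.fromEdgeSet
    {e | ∃ k : Fin m, e = s(c k, c ⟨((k : ℕ) + 1) % m, Nat.mod_lt _ k.pos⟩)}

/-- `H` is the chain of the `n` cycles `Z_j = cycleOn (c j)` (each of length `m j ≥ 3`,
injectively parametrized), with `a j, b j ∈ Z j`, cycles at distance `> 1` disjoint and
consecutive cycles meeting exactly at `b j = a (j+1)`. -/
def IsChainData {W : Type} {n : ℕ} (H : SimpleGraph W) (m : Fin n → ℕ)
    (c : (j : Fin n) → Fin (m j) → W) (a b : Fin n → W) : Prop :=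
  (∀ j, 3 ≤ m j) ∧
  (∀ j, Function.Injective (c j)) ∧
  (H = ⨆ j, cycleOn (c j)) ∧
  (∀ j, a j ∈ Set.range (c j) ∧ b j ∈ Set.range (c j)) ∧
  (∀ i j : Fin n, (i : ℕ) + 1 < (j : ℕ) → Set.range (c i) ∩ Set.range (c j) = ∅) ∧
  (∀ j : Fin n, ∀ h : (j : ℕ) + 1 < n,
    Set.range (c j) ∩ Set.range (c ⟨(j : ℕ) + 1, h⟩) = {b j} ∧ a ⟨(j : ℕ) + 1, h⟩ = b j)

/-- `H` is a chain of `n` cycles with distinguished vertices `a j, b j`. -/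
def IsChainOfCycles {W : Type} (H : SimpleGraph W) (n : ℕ) (a b : Fin n → W) : Prop :=
  ∃ m c, IsChainData H m c a b

/-- `G` is (isomorphic to) a subgraph of some chain of cycles. -/
def IsSubgraphOfChain {V : Type} (G : SimpleGraph V) : Prop :=
  ∃ (W : Type) (_ : Fintype W) (n : ℕ) (a b : Fin n → W) (H : SimpleGraph W),
    IsChainOfCycles H n a b ∧ ∃ f : G →g H, Function.Injective f

/-- A vertex `i` of a graph on `{1,…,n}` is separating if no edge `(u,v)` has `u < i < v`. -/
def Separating {n : ℕ} (G : SimpleGraph (Fin n)) (i : Fin n) : Prop :=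
  ¬ ∃ u v : Fin n, G.Adj u v ∧ u < i ∧ i < v

/-- The graph obtained from `G` by subdividing the edge `(u,v)` with a new vertex `none`. -/
def subdivideEdge {V : Type} (G : SimpleGraph V) (u v : V) : SimpleGraph (Option V) :=
  SimpleGraph.fromEdgeSet
    ((Sym2.map some '' (G.edgeSet \ {s(u, v)})) ∪ {s(some u, none), s(some v, none)})

/-- `Homeo G H` : the graph `H` is homeomorphic to `G`, i.e. obtained from `G`
(up to isomorphism) by repeatedly subdividing edges. -/
inductive Homeo : {V : Type} → SimpleGraph V → {W : Type} → SimpleGraph W → Prop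
  | of_iso {V W : Type} {G : SimpleGraph V} {H : SimpleGraph W} (e : G ≃g H) : Homeo G H
  | step {V W : Type} {G : SimpleGraph V} {H : SimpleGraph W} (u v : V) (huv : G.Adj u v)
      (h : Homeo (subdivideEdge G u v) H) : Homeo G H

/-- The graph `G_n` on `3n - 4` vertices: a path `v_1, …, v_n` together with two pendant
vertices attached to each internal vertex of the path. -/
def Gn (n : ℕ) :
    SimpleGraph (Fin n ⊕ {p : Fin n × Fin 2 // 0 < (p.1.1 : ℕ) ∧ (p.1.1 : ℕ) < n - 1}) :=
  SimpleGraph.fromEdgeSet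
    ({e | ∃ j k : Fin n, e = s(Sum.inl j, Sum.inl k) ∧ (j : ℕ) + 1 = (k : ℕ)} ∪
     {e | ∃ p, e = s(Sum.inl p.1.1, Sum.inr p)})


/-- position of parameter `t` in a block starting at `off`, cycle length `m`, split `d`. -/
def posF (off m d t : ℕ) : ℕ :=
  if t = 0 then off - 1
  else if t < d then off + t - 1
  else if t = d then off + m - 2
  else off + d + m - t - 2

section posF
variable {off m d t t1 t2 : ℕ}

lemma posF_le (hm : 3 ≤ m) (hd1 : 1 ≤ d) (hd2 : d ≤ m) (hoff : 1 ≤ off) (ht : t < m) : posF off m d t ≤ off + m - 2 := by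
  unfold posF; split_ifs <;> omega

lemma posF_ge (hm : 3 ≤ m) (hd1 : 1 ≤ d) (hd2 : d ≤ m) (hoff : 1 ≤ off) (ht : t < m) : off - 1 ≤ posF off m d t := by
  unfold posF; split_ifs <;> omega

lemma posF_ge' (hm : 3 ≤ m) (hd1 : 1 ≤ d) (hd2 : d ≤ m) (hoff : 1 ≤ off) (ht : 1 ≤ t) (ht2 : t < m) : off ≤ posF off m d t := by
  unfold posF; split_ifs <;> omega

lemma posF_inj (hm : 3 ≤ m) (hd1 : 1 ≤ d) (hd2 : d ≤ m) (hoff : 1 ≤ off) (h1 : t1 < m) (h2 : t2 < m) (h : posF off m d t1 = posF off m d t2) :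
    t1 = t2 := by
  unfold posF at h; split_ifs at h <;> omega

/-- strictly increasing on the ascending part `[0, min d (m-1)]` -/
lemma posF_mono (hm : 3 ≤ m) (hd1 : 1 ≤ d) (hd2 : d ≤ m) (hoff : 1 ≤ off) (h1 : t1 < t2) (h2 : t2 ≤ min d (m-1)) :
    posF off m d t1 < posF off m d t2 := by
  unfold posF; split_ifs <;> omega

/-- strictly decreasing on the descending part `[min d (m-1), m-1]` -/
lemma posF_anti (hm : 3 ≤ m) (hd1 : 1 ≤ d) (hd2 : d ≤ m) (hoff : 1 ≤ off) (h0 : min d (m-1) ≤ t1) (h1 : t1 < t2) (h2 : t2 ≤ m - 1) :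
    posF off m d t2 < posF off m d t1 := by
  unfold posF; split_ifs <;> omega

/-- the wrap edge from `t = m-1` back to `0` descends -/
lemma posF_wrap (hm : 3 ≤ m) (hd1 : 1 ≤ d) (hd2 : d ≤ m) (hoff : 1 ≤ off) (ht : 1 ≤ t) (ht2 : t < m) : posF off m d 0 < posF off m d t := by
  unfold posF; split_ifs <;> omega

end posF

section modl
variable {m A k t : ℕ}

lemma modAbsorb (x : ℕ) (hm : 0 < m) : (A + x % m) % m = (A + x) % m := by
  conv_rhs => rw [Nat.add_mod]
  rw [Nat.add_mod, Nat.mod_mod_of_dvd _ dvd_rfl]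

lemma modAbsorb' (x y : ℕ) (hm : 0 < m) : (x % m + y) % m = (x + y) % m := by
  conv_rhs => rw [Nat.add_mod]
  rw [Nat.add_mod, Nat.mod_mod_of_dvd _ dvd_rfl]

lemma mod1 (hA : A < m) (hk : k < m) : (A + (k + m - A) % m) % m = k := by
  rw [modAbsorb _ (by omega)]
  have : A + (k + m - A) = k + m := by omega
  rw [this, Nat.add_mod_right, Nat.mod_eq_of_lt hk]

lemma mod2 (hA : A < m) (ht : t < m) : ((A + t) % m + m - A) % m = t := by
  have h1 : (A + t) % m + m - A = (A + t) % m + (m - A) := by omega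
  rw [h1, modAbsorb' _ _ (by omega)]
  have : A + t + (m - A) = t + m := by omega
  rw [this, Nat.add_mod_right, Nat.mod_eq_of_lt ht]

lemma mod3 (hm : 0 < m) : (A + (t + 1) % m) % m = ((A + t) % m + 1) % m := by
  rw [modAbsorb _ hm, modAbsorb' _ _ hm, ← Nat.add_assoc]
end modl

lemma ncard_le_two_of_inj {X : Type} (s : Set X) (F : X → Bool) (h : Set.InjOn F s) :
    s.ncard ≤ 2 := by
  rw [← Set.ncard_image_of_injOn h]
  calc (F '' s).ncard ≤ (Set.univ : Set Bool).ncard :=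
        Set.ncard_le_ncard (Set.subset_univ _) Set.finite_univ
    _ = 2 := by rw [Set.ncard_univ]; simp

section gdef
variable {W : Type} (n : ℕ) (M : ℕ → ℕ) (C : ℕ → ℕ → W) (AA DD : ℕ → ℕ)
  (off : ℕ → ℕ) (emb : W → ℕ)

open scoped Classical in
noncomputable def jdx (w : W) : ℕ :=
  if h : ∃ j, j < n ∧ ∃ k, k < M j ∧ C j k = w then Nat.find h else n

open scoped Classical in
noncomputable def kdx (w : W) : ℕ :=
  if h : ∃ k, k < M (jdx n M C w) ∧ C (jdx n M C w) k = w then Nat.find h else 0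

noncomputable def gg (w : W) : ℕ :=
  if jdx n M C w < n then
    posF (off (jdx n M C w)) (M (jdx n M C w)) (DD (jdx n M C w))
      ((kdx n M C w + M (jdx n M C w) - AA (jdx n M C w)) % M (jdx n M C w))
  else off n + emb w

variable {n M C}

lemma jdx_le {w : W} {j : ℕ} (hj : j < n) (hex : ∃ k, k < M j ∧ C j k = w) :
    jdx n M C w ≤ j := by
  classical
  unfold jdx
  rw [dif_pos ⟨j, hj, hex⟩]
  exact Nat.find_le ⟨hj, hex⟩

lemma jdx_lt {w : W} {j : ℕ} (hj : j < n) (hex : ∃ k, k < M j ∧ C j k = w) :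
    jdx n M C w < n := lt_of_le_of_lt (jdx_le hj hex) hj

lemma jdx_spec {w : W} (h : jdx n M C w < n) :
    kdx n M C w < M (jdx n M C w) ∧ C (jdx n M C w) (kdx n M C w) = w := by
  classical
  have hex : ∃ j, j < n ∧ ∃ k, k < M j ∧ C j k = w := by
    by_contra hc
    unfold jdx at h
    rw [dif_neg hc] at h
    exact lt_irrefl _ h
  have h2 : ∃ k, k < M (jdx n M C w) ∧ C (jdx n M C w) k = w := by
    have := Nat.find_spec hex
    unfold jdx
    rw [dif_pos hex]
    exact this.2
  unfold kdx
  rw [dif_pos h2]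
  exact Nat.find_spec h2

lemma jdx_min {w : W} {i : ℕ} (h : i < jdx n M C w) (hi : i < n) :
    ¬∃ k, k < M i ∧ C i k = w := by
  classical
  intro hex
  exact absurd (jdx_le hi hex) (not_le_of_gt h)

lemma gg_eq_pos {w : W} (h : jdx n M C w < n) :
    gg n M C AA DD off emb w =
      posF (off (jdx n M C w)) (M (jdx n M C w)) (DD (jdx n M C w))
        ((kdx n M C w + M (jdx n M C w) - AA (jdx n M C w)) % M (jdx n M C w)) := by
  unfold gg; rw [if_pos h]

lemma gg_eq_rest {w : W} (h : ¬ jdx n M C w < n) :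
    gg n M C AA DD off emb w = off n + emb w := by
  unfold gg; rw [if_neg h]

end gdef

lemma reduceCW {W : Type} [Fintype W] (G : SimpleGraph W) (g : W → ℕ)
    (hg : Function.Injective g)
    (hb : ∀ i : ℕ, {p : W × W | G.Adj p.1 p.2 ∧ g p.1 ≤ i ∧ i < g p.2}.ncard ≤ 2) :
    CutwidthLE G 2 := by
  classical
  letI : LinearOrder W := LinearOrder.lift' g hg
  have hle : ∀ u w : W, u ≤ w ↔ g u ≤ g w := fun u w => Iff.rfl
  let f := (Fintype.orderIsoFinOfCardEq W rfl).symm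
  refine ⟨f.toEquiv, fun i => ?_⟩
  unfold crossCount
  by_cases hi : i < Fintype.card W
  · set w0 := f.symm ⟨i, hi⟩ with hw0
    have hkey : ∀ u : W, ((f u : Fin _) : ℕ) ≤ i ↔ g u ≤ g w0 := by
      intro u
      rw [← hle]
      have : u ≤ w0 ↔ f u ≤ f w0 := (f.le_iff_le).symm
      rw [this]
      have : f w0 = ⟨i, hi⟩ := by simp [hw0]
      rw [this]
      exact Iff.rfl
    have hkey2 : ∀ u : W, i < ((f u : Fin _) : ℕ) ↔ g w0 < g u := by
      intro u
      have h1 := hkey u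
      constructor
      · intro h
        by_contra h2
        exact absurd (h1.mpr (le_of_not_gt h2)) (not_le_of_gt h)
      · intro h
        by_contra h2
        exact absurd (h1.mp (le_of_not_gt h2)) (not_le_of_gt h)
    have : {p : W × W | G.Adj p.1 p.2 ∧ ((f p.1 : Fin _) : ℕ) ≤ i ∧ i < ((f p.2 : Fin _) : ℕ)}
        = {p : W × W | G.Adj p.1 p.2 ∧ g p.1 ≤ g w0 ∧ g w0 < g p.2} := by
      ext p
      simp only [Set.mem_setOf_eq, hkey, hkey2]
    rw [show (⇑f.toEquiv : W → Fin _) = ⇑f from rfl] at *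
    rw [this]
    exact hb (g w0)
  · have : {p : W × W | G.Adj p.1 p.2 ∧ ((f.toEquiv p.1 : Fin _) : ℕ) ≤ i ∧ i < ((f.toEquiv p.2 : Fin _) : ℕ)} = ∅ := by
      ext p
      simp only [Set.mem_setOf_eq, Set.mem_empty_iff_false, iff_false]
      rintro ⟨-, -, h2⟩
      exact absurd ((f.toEquiv p.2).2) (not_lt_of_ge (le_of_lt (lt_of_le_of_lt (Nat.le_of_not_lt hi) h2)))
    rw [this]
    simp

/-- A chain of cycles has cutwidth at most 2. -/
theorem chain_of_cycles_cutwidth_le_two {W : Type} [Fintype W] (H : SimpleGraph W)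
    (n : ℕ) (hn : 1 ≤ n) (a b : Fin n → W) (h : IsChainOfCycles H n a b) :
    CutwidthLE H 2 := by
  classical
  obtain ⟨m, c, hm, hc, hHeq, hab, hdisj, hcons⟩ := h
  choose α hα using fun j => (hab j).1
  choose β hβ using fun j => (hab j).2
  have hn0 : 0 < n := hn
  -- ℕ-indexed versions of the hypotheses
  have hconsN : ∀ (j : ℕ) (hj1 : j + 1 < n),
      (Set.range (c ⟨j, Nat.lt_of_succ_lt hj1⟩) ∩ Set.range (c ⟨j + 1, hj1⟩) =
        {b ⟨j, Nat.lt_of_succ_lt hj1⟩}) ∧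
      a ⟨j + 1, hj1⟩ = b ⟨j, Nat.lt_of_succ_lt hj1⟩ :=
    fun j hj1 => hcons ⟨j, Nat.lt_of_succ_lt hj1⟩ hj1
  have hdisjN : ∀ (i j : ℕ) (hi : i < n) (hj : j < n), i + 1 < j →
      Set.range (c ⟨i, hi⟩) ∩ Set.range (c ⟨j, hj⟩) = ∅ :=
    fun i j hi hj hij => hdisj ⟨i, hi⟩ ⟨j, hj⟩ hij
  -- ℕ-land data
  set w0 : W := c ⟨0, hn0⟩ ⟨0, by have := hm ⟨0, hn0⟩; omega⟩ with hw0def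
  set M : ℕ → ℕ := fun j => if h : j < n then m ⟨j, h⟩ else 3 with hMdef
  have hM3 : ∀ j, 3 ≤ M j := by
    intro j; simp only [hMdef]; split_ifs with h; exacts [hm _, le_refl 3]
  have hMeq : ∀ {j : ℕ} (hj : j < n), M j = m ⟨j, hj⟩ := by
    intro j hj; simp only [hMdef, dif_pos hj]
  set C : ℕ → ℕ → W := fun j k =>
    if h : j < n then c ⟨j, h⟩ ⟨k % m ⟨j, h⟩, Nat.mod_lt _ (by have := hm ⟨j, h⟩; omega)⟩
    else w0 with hCdef
  have hCval : ∀ {j : ℕ} (hj : j < n) (k : Fin (m ⟨j, hj⟩)), C j (k : ℕ) = c ⟨j, hj⟩ k := by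
    intro j hj k
    simp only [hCdef, dif_pos hj]
    congr 1
    exact Fin.ext (Nat.mod_eq_of_lt k.2)
  have hCrange : ∀ {j : ℕ} (hj : j < n) (k : ℕ), C j k ∈ Set.range (c ⟨j, hj⟩) := by
    intro j hj k
    simp only [hCdef, dif_pos hj]
    exact Set.mem_range_self _
  have hCinj : ∀ {j : ℕ} (hj : j < n) {k1 k2 : ℕ}, k1 < M j → k2 < M j →
      C j k1 = C j k2 → k1 = k2 := by
    intro j hj k1 k2 h1 h2 he
    rw [hMeq hj] at h1 h2
    simp only [hCdef, dif_pos hj] at he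
    have h3 : k1 % m ⟨j, hj⟩ = k2 % m ⟨j, hj⟩ := congrArg Fin.val (hc _ he)
    rwa [Nat.mod_eq_of_lt h1, Nat.mod_eq_of_lt h2] at h3
  set BB : ℕ → ℕ := fun j => if h : j < n then (β ⟨j, h⟩ : ℕ) else 0 with hBBdef
  set AA : ℕ → ℕ := fun j =>
    if h : j < n then (if j = 0 then (BB j + 1) % M j else (α ⟨j, h⟩ : ℕ)) else 0 with hAAdef
  set DD : ℕ → ℕ := fun j => if AA j = BB j then M j else (BB j + M j - AA j) % M j with hDDdef
  set off : ℕ → ℕ := fun j => 1 + ∑ i ∈ Finset.range j, (M i - 1) with hoffdef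
  set emb : W → ℕ := fun w => ((Fintype.equivFin W) w : ℕ) with hembdef
  set g : W → ℕ := gg n M C AA DD off emb with hgdef
  set vv : ℕ → ℕ → W := fun j t => C j ((AA j + t) % M j) with hvvdef
  -- basic index facts
  have hBlt : ∀ {j : ℕ} (hj : j < n), BB j < M j := by
    intro j hj; simp only [hBBdef, dif_pos hj]; rw [hMeq hj]; exact (β _).2
  have hAlt : ∀ {j : ℕ} (hj : j < n), AA j < M j := by
    intro j hj; simp only [hAAdef, dif_pos hj]
    split_ifs
    · exact Nat.mod_lt _ (by have := hM3 j; omega)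
    · rw [hMeq hj]; exact (α _).2
  have hCb : ∀ {j : ℕ} (hj : j < n), C j (BB j) = b ⟨j, hj⟩ := by
    intro j hj
    have : BB j = ((β ⟨j, hj⟩ : Fin (m ⟨j, hj⟩)) : ℕ) := by simp only [hBBdef, dif_pos hj]
    rw [this, hCval hj]; exact hβ _
  have hCa : ∀ {j : ℕ} (hj : j < n), j ≠ 0 → C j (AA j) = a ⟨j, hj⟩ := by
    intro j hj hj0
    have : AA j = ((α ⟨j, hj⟩ : Fin (m ⟨j, hj⟩)) : ℕ) := by
      simp only [hAAdef, dif_pos hj, if_neg hj0]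
    rw [this, hCval hj]; exact hα _
  have hABne0 : AA 0 ≠ BB 0 := by
    have hB := hBlt hn0
    have hM := hM3 0
    have hA0 : AA 0 = (BB 0 + 1) % M 0 := by simp [hAAdef, dif_pos hn0]
    rw [hA0]
    intro hEq
    rcases Nat.lt_or_ge (BB 0 + 1) (M 0) with hlt | hge
    · rw [Nat.mod_eq_of_lt hlt] at hEq; omega
    · have hx : BB 0 + 1 = M 0 := by omega
      rw [hx, Nat.mod_self] at hEq; omega
  have hABne : ∀ j, j + 1 < n → AA j ≠ BB j := by
    intro j hj1 hEq
    have hj : j < n := by omega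
    rcases Nat.eq_zero_or_pos j with rfl | hjpos
    · exact hABne0 hEq
    · -- a j = b j, but a j = b (j-1) ∈ range c (j-1) and b j = a (j+1) ∈ range c (j+1)
      have hab' : a ⟨j, hj⟩ = b ⟨j, hj⟩ := by
        rw [← hCa hj (by omega), ← hCb hj, hEq]
      have hj1' : (j - 1) + 1 < n := by omega
      have e1 : (⟨j - 1 + 1, hj1'⟩ : Fin n) = ⟨j, hj⟩ := by
        apply Fin.ext; simp; omega
      have ha2 : a ⟨j, hj⟩ = b ⟨j - 1, Nat.lt_of_succ_lt hj1'⟩ := by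
        rw [← e1]; exact (hconsN (j - 1) hj1').2
      have hb2 : b ⟨j, hj⟩ = a ⟨j + 1, hj1⟩ := ((hconsN j hj1).2).symm
      have hmem1 : b ⟨j, hj⟩ ∈ Set.range (c ⟨j - 1, Nat.lt_of_succ_lt hj1'⟩) := by
        rw [← hab', ha2]; exact ⟨β _, hβ _⟩
      have hmem2 : b ⟨j, hj⟩ ∈ Set.range (c ⟨j + 1, hj1⟩) := by
        rw [hb2]; exact ⟨α _, hα _⟩
      have hd := hdisjN (j - 1) (j + 1) (Nat.lt_of_succ_lt hj1') hj1 (by omega)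
      have : b ⟨j, hj⟩ ∈ (∅ : Set W) := hd ▸ Set.mem_inter hmem1 hmem2
      exact this
  have hD1 : ∀ {j : ℕ} (hj : j < n), 1 ≤ DD j := by
    intro j hj
    have hA := hAlt hj; have hB := hBlt hj; have hM := hM3 j
    simp only [hDDdef]
    split_ifs with hEq
    · omega
    · rcases Nat.lt_or_ge (BB j + M j - AA j) (M j) with h1 | h1
      · rw [Nat.mod_eq_of_lt h1]; omega
      · rw [Nat.mod_eq_sub_mod h1, Nat.mod_eq_of_lt (by omega)]; omega
  have hD2 : ∀ {j : ℕ} (hj : j < n), DD j ≤ M j := by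
    intro j hj
    have hM := hM3 j
    simp only [hDDdef]
    split_ifs with hEq
    · omega
    · exact le_of_lt (Nat.mod_lt _ (by omega))
  have hBeq : ∀ {j : ℕ} (hj : j < n), (AA j + DD j) % M j = BB j := by
    intro j hj
    have hA := hAlt hj; have hB := hBlt hj; have hM := hM3 j
    simp only [hDDdef]
    split_ifs with hEq
    · rw [Nat.add_mod_right, Nat.mod_eq_of_lt hA]; omega
    · rw [modAbsorb _ (by omega)]
      have hx : AA j + (BB j + M j - AA j) = BB j + M j := by omega
      rw [hx, Nat.add_mod_right, Nat.mod_eq_of_lt hB]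
  have hDlt : ∀ j, j + 1 < n → DD j < M j := by
    intro j hj1
    simp only [hDDdef]
    rw [if_neg (hABne j hj1)]
    exact Nat.mod_lt _ (by have := hM3 j; omega)
  have hDeq : ∀ {j : ℕ}, AA j ≠ BB j → (BB j + M j - AA j) % M j = DD j := by
    intro j hne
    simp only [hDDdef]
    rw [if_neg hne]
  -- offsets
  have hoffS : ∀ j, off (j + 1) = off j + (M j - 1) := by
    intro j; simp only [hoffdef, Finset.sum_range_succ]; omega
  have hoffmono : ∀ i j, i ≤ j → off i ≤ off j := by
    intro i j hij
    simp only [hoffdef]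
    exact Nat.add_le_add_left (Finset.sum_le_sum_of_subset (Finset.range_subset_range.mpr hij)) 1
  have hoff1 : ∀ j, 1 ≤ off j := by intro j; simp only [hoffdef]; omega
  -- vv facts
  have hvvlt : ∀ j t, (AA j + t) % M j < M j :=
    fun j t => Nat.mod_lt _ (by have := hM3 j; omega)
  have hvv_inj : ∀ {j : ℕ} (hj : j < n) {t1 t2 : ℕ}, t1 < M j → t2 < M j →
      vv j t1 = vv j t2 → t1 = t2 := by
    intro j hj t1 t2 h1 h2 hEq
    simp only [hvvdef] at hEq
    have h3 := hCinj hj (hvvlt j t1) (hvvlt j t2) hEq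
    have e1 := mod2 (hAlt hj) h1
    have e2 := mod2 (hAlt hj) h2
    rw [← e1, ← e2, h3]
  have hvv_rep : ∀ {j : ℕ} (hj : j < n) {k : ℕ}, k < M j →
      ∃ t, t < M j ∧ vv j t = C j k ∧ (AA j + t) % M j = k := by
    intro j hj k hk
    refine ⟨(k + M j - AA j) % M j, Nat.mod_lt _ (by have := hM3 j; omega), ?_, ?_⟩
    · simp only [hvvdef]; rw [mod1 (hAlt hj) hk]
    · exact mod1 (hAlt hj) hk
  -- the key coherence lemma
  have hkey : ∀ {j : ℕ} (hj : j < n) {t : ℕ}, t < M j →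
      g (vv j t) = posF (off j) (M j) (DD j) t := by
    intro j hj t ht
    have hexj : ∃ k, k < M j ∧ C j k = vv j t := ⟨(AA j + t) % M j, hvvlt j t, rfl⟩
    have hjlt : jdx n M C (vv j t) < n := jdx_lt hj hexj
    have hjle : jdx n M C (vv j t) ≤ j := jdx_le hj hexj
    obtain ⟨hk1, hk2⟩ := jdx_spec hjlt
    have hj0ge : j ≤ jdx n M C (vv j t) + 1 := by
      by_contra hlt
      push_neg at hlt
      have hd := hdisjN _ j hjlt hj (by omega)
      have hw1 : vv j t ∈ Set.range (c ⟨jdx n M C (vv j t), hjlt⟩) := by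
        obtain ⟨y, hy⟩ := hCrange hjlt (kdx n M C (vv j t))
        exact ⟨y, hy.trans hk2⟩
      have hw2 : vv j t ∈ Set.range (c ⟨j, hj⟩) := by
        simp only [hvvdef]; exact hCrange hj _
      exact absurd (hd ▸ Set.mem_inter hw1 hw2) (Set.notMem_empty _)
    rcases eq_or_lt_of_le hjle with hEq | hlt2
    · -- the least index is j itself
      rw [hEq] at hk1 hk2
      have hkind : kdx n M C (vv j t) = (AA j + t) % M j :=
        hCinj hj hk1 (hvvlt j t) hk2
      rw [hgdef, gg_eq_pos AA DD off emb hjlt, hEq, hkind, mod2 (hAlt hj) ht]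
    · -- the least index is j - 1 and vv j t = b (j-1)
      set j0 := jdx n M C (vv j t) with hj0d
      have hj01 : j = j0 + 1 := by omega
      have e1 : (⟨j0 + 1, hj01 ▸ hj⟩ : Fin n) = ⟨j, hj⟩ := by apply Fin.ext; simp; omega
      have hwb : vv j t = b ⟨j0, hjlt⟩ := by
        have hI := (hconsN j0 (by omega)).1
        have hw1 : vv j t ∈ Set.range (c ⟨j0, hjlt⟩) := by
          obtain ⟨y, hy⟩ := hCrange hjlt (kdx n M C (vv j t))
          exact ⟨y, hy.trans hk2⟩
        have hw2 : vv j t ∈ Set.range (c ⟨j0 + 1, by omega⟩) := by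
          rw [e1]; simp only [hvvdef]; exact hCrange hj _
        have hmem : vv j t ∈ Set.range (c ⟨j0, hjlt⟩) ∩ Set.range (c ⟨j0 + 1, by omega⟩) :=
          Set.mem_inter hw1 hw2
        have : vv j t ∈ ({b ⟨j0, hjlt⟩} : Set W) := by
          rw [← hI]; convert hmem using 4
        simpa using this
      have hkB : kdx n M C (vv j t) = BB j0 := by
        apply hCinj hjlt hk1 (hBlt hjlt)
        rw [hk2, hwb]
        exact (hCb hjlt).symm
      have hwa : vv j t = a ⟨j, hj⟩ := by
        rw [hwb, ← e1]
        exact ((hconsN j0 (by omega)).2).symm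
      have ht0 : t = 0 := by
        have hCC : C j ((AA j + t) % M j) = C j (AA j) := by
          have : C j (AA j) = a ⟨j, hj⟩ := hCa hj (by omega)
          rw [this, ← hwa]
        have h4 := hCinj hj (hvvlt j t) (hAlt hj) hCC
        have e2 := mod2 (hAlt hj) ht
        rw [h4] at e2
        have e3 : AA j + M j - AA j = M j := by omega
        rw [e3, Nat.mod_self] at e2
        omega
      have hane : AA j0 ≠ BB j0 := hABne j0 (by omega)
      rw [hgdef, gg_eq_pos AA DD off emb hjlt, ← hj0d, hkB, hDeq hane, ht0]
      have hd1 := hD1 hjlt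
      have hd2 := hDlt j0 (by omega)
      have hS := hoffS j0
      have hM0 := hM3 j0
      have hM1 := hM3 j
      have ho1 := hoff1 j0
      have hoffj : off j = off j0 + (M j0 - 1) := by rw [hj01]; exact hoffS j0
      simp only [posF]
      split_ifs <;> omega
  -- bounds for g on cycle vertices
  have hgub : ∀ {j : ℕ} (hj : j < n) {t : ℕ}, t < M j → g (vv j t) ≤ off (j + 1) - 1 := by
    intro j hj t ht
    rw [hkey hj ht]
    have := posF_le (hM3 j) (hD1 hj) (hD2 hj) (hoff1 j) ht
    have := hoffS j
    have := hM3 j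
    omega
  have hglb : ∀ {j : ℕ} (hj : j < n) {t : ℕ}, t < M j → off j - 1 ≤ g (vv j t) := by
    intro j hj t ht
    rw [hkey hj ht]
    exact posF_ge (hM3 j) (hD1 hj) (hD2 hj) (hoff1 j) ht
  have hglb' : ∀ {j : ℕ} (hj : j < n) {t : ℕ}, 1 ≤ t → t < M j → off j ≤ g (vv j t) := by
    intro j hj t ht1 ht
    rw [hkey hj ht]
    exact posF_ge' (hM3 j) (hD1 hj) (hD2 hj) (hoff1 j) ht1 ht
  -- canonical representations
  have hcanon : ∀ {w : W} {j k : ℕ} (hj : j < n), k < M j → C j k = w →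
      ∃ j' t, j' < n ∧ t < M j' ∧ vv j' t = w ∧ (1 ≤ t ∨ j' = 0) := by
    intro w j k hj hk hCw
    obtain ⟨t, ht, hvt, hAt⟩ := hvv_rep hj hk
    rcases Nat.eq_zero_or_pos t with rfl | htpos
    · rcases Nat.eq_zero_or_pos j with rfl | hjpos
      · exact ⟨0, 0, hj, ht, by rw [hvt, hCw], Or.inr rfl⟩
      · have hj1' : (j - 1) + 1 < n := by omega
        have hj'lt : j - 1 < n := by omega
        have e1 : (⟨j - 1 + 1, hj1'⟩ : Fin n) = ⟨j, hj⟩ := by apply Fin.ext; simp; omega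
        have hane : AA (j - 1) ≠ BB (j - 1) := hABne (j - 1) (by omega)
        refine ⟨j - 1, DD (j - 1), hj'lt, hDlt (j - 1) (by omega), ?_, Or.inl (hD1 hj'lt)⟩
        have hv1 : vv (j - 1) (DD (j - 1)) = C (j - 1) (BB (j - 1)) := by
          simp only [hvvdef]; rw [hBeq hj'lt]
        have hv2 : C j (AA j) = a ⟨j, hj⟩ := hCa hj (by omega)
        have hv3 : a ⟨j, hj⟩ = b ⟨j - 1, hj'lt⟩ := by
          rw [← e1]; exact (hconsN (j - 1) hj1').2
        have hv4 : vv j 0 = C j (AA j) := by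
          simp only [hvvdef]
          rw [Nat.add_zero, Nat.mod_eq_of_lt (hAlt hj)]
        rw [hv1, hCb hj'lt, ← hv3, ← hv2, ← hv4, hvt, hCw]
    · exact ⟨j, t, hj, ht, by rw [hvt, hCw], Or.inl htpos⟩
  -- injectivity of g
  have hgcyc : ∀ w : W, (∃ j, j < n ∧ ∃ k, k < M j ∧ C j k = w) → g w ≤ off n - 1 := by
    intro w hw
    obtain ⟨j, hj, k, hk, hCw⟩ := hw
    obtain ⟨j', t, hj', ht, hvt, -⟩ := hcanon hj hk hCw
    rw [← hvt]
    have h1 := hgub hj' ht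
    have h2 := hoffmono (j' + 1) n (by omega)
    have h3 := hoff1 (j' + 1)
    omega
  have hgrest : ∀ w : W, ¬(∃ j, j < n ∧ ∃ k, k < M j ∧ C j k = w) → g w = off n + emb w := by
    intro w hw
    rw [hgdef]
    apply gg_eq_rest AA DD off emb
    intro hlt
    obtain ⟨hk1, hk2⟩ := jdx_spec hlt
    exact hw ⟨jdx n M C w, hlt, kdx n M C w, hk1, hk2⟩
  have hsame : ∀ {j1 t1 j2 t2 : ℕ}, j1 < n → t1 < M j1 → (1 ≤ t1 ∨ j1 = 0) →
      j2 < n → t2 < M j2 → (1 ≤ t2 ∨ j2 = 0) → j1 ≤ j2 →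
      posF (off j1) (M j1) (DD j1) t1 = posF (off j2) (M j2) (DD j2) t2 → j1 = j2 := by
    intro j1 t1 j2 t2 hj1 ht1 hc1 hj2 ht2 hc2 hle hpe
    by_contra hne
    have hlt : j1 < j2 := by omega
    have h2' : 1 ≤ t2 := by rcases hc2 with h | h; exacts [h, by omega]
    have hA := posF_le (hM3 j1) (hD1 hj1) (hD2 hj1) (hoff1 j1) ht1
    have hB := posF_ge' (hM3 j2) (hD1 hj2) (hD2 hj2) (hoff1 j2) h2' ht2
    have hmono := hoffmono (j1 + 1) j2 (by omega)
    have hS := hoffS j1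
    have ho1 := hoff1 j1
    have hM1 := hM3 j1
    omega
  have hginj : Function.Injective g := by
    intro w1 w2 hg12
    by_cases h1 : ∃ j, j < n ∧ ∃ k, k < M j ∧ C j k = w1 <;>
      by_cases h2 : ∃ j, j < n ∧ ∃ k, k < M j ∧ C j k = w2
    · obtain ⟨j1, hj1, k1, hk1, hC1⟩ := h1
      obtain ⟨j2, hj2, k2, hk2, hC2⟩ := h2
      obtain ⟨j1', t1, hj1', ht1, hv1, hc1⟩ := hcanon hj1 hk1 hC1
      obtain ⟨j2', t2, hj2', ht2, hv2, hc2⟩ := hcanon hj2 hk2 hC2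
      rw [← hv1, ← hv2] at hg12
      rw [hkey hj1' ht1, hkey hj2' ht2] at hg12
      have hjeq : j1' = j2' := by
        rcases le_total j1' j2' with h | h
        · exact hsame hj1' ht1 hc1 hj2' ht2 hc2 h hg12
        · exact (hsame hj2' ht2 hc2 hj1' ht1 hc1 h hg12.symm).symm
      subst hjeq
      have hteq : t1 = t2 :=
        posF_inj (hM3 j1') (hD1 hj1') (hD2 hj1') (hoff1 j1') ht1 ht2 hg12
      rw [← hv1, ← hv2, hteq]
    · exfalso
      have ha := hgcyc w1 h1
      have hb := hgrest w2 h2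
      have := hoff1 n
      omega
    · exfalso
      have ha := hgcyc w2 h2
      have hb := hgrest w1 h1
      have := hoff1 n
      omega
    · have ha := hgrest w1 h1
      have hb := hgrest w2 h2
      rw [ha, hb] at hg12
      have : emb w1 = emb w2 := by omega
      simp only [hembdef] at this
      exact (Fintype.equivFin W).injective (Fin.ext this)
  -- adjacency decomposition
  have hadj : ∀ u v : W, H.Adj u v → ∃ j t, j < n ∧ t < M j ∧
      s(u, v) = s(vv j t, vv j ((t + 1) % M j)) := by
    intro u v huv
    rw [hHeq, SimpleGraph.iSup_adj] at huv
    obtain ⟨jf, hjf⟩ := huv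
    rw [cycleOn, SimpleGraph.fromEdgeSet_adj] at hjf
    obtain ⟨⟨k, hk⟩, hne⟩ := hjf
    have hj : (jf : ℕ) < n := jf.2
    have hkM : (k : ℕ) < M (jf : ℕ) := by rw [hMeq hj]; exact k.2
    obtain ⟨t, ht, hvt, hAt⟩ := hvv_rep hj hkM
    refine ⟨(jf : ℕ), t, hj, ht, ?_⟩
    have e1 : c jf k = vv (jf : ℕ) t := by
      rw [hvt]; exact (hCval hj k).symm
    have e2 : c jf ⟨((k : ℕ) + 1) % m jf, Nat.mod_lt _ k.pos⟩ =
        vv (jf : ℕ) ((t + 1) % M (jf : ℕ)) := by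
      have h1 : vv (jf : ℕ) ((t + 1) % M (jf : ℕ)) = C (jf : ℕ) (((k : ℕ) + 1) % M (jf : ℕ)) := by
        simp only [hvvdef]
        rw [mod3 (by have := hM3 (jf : ℕ); omega), hAt]
      rw [h1, hMeq hj]
      exact (hCval hj ⟨((k : ℕ) + 1) % m ⟨(jf : ℕ), hj⟩,
        Nat.mod_lt _ (by have := hm ⟨(jf : ℕ), hj⟩; omega)⟩).symm
    rw [hk, e1, e2]
  -- the crossing bound
  have hcross : ∀ i : ℕ, {p : W × W | H.Adj p.1 p.2 ∧ g p.1 ≤ i ∧ i < g p.2}.ncard ≤ 2 := by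
    intro i
    by_cases hbig : off n - 1 ≤ i
    · have hemp : {p : W × W | H.Adj p.1 p.2 ∧ g p.1 ≤ i ∧ i < g p.2} = ∅ := by
        ext p
        simp only [Set.mem_setOf_eq, Set.mem_empty_iff_false, iff_false]
        rintro ⟨hadjp, hle, hlt⟩
        obtain ⟨j, t, hj, ht, hsym⟩ := hadj _ _ hadjp
        have hub : ∀ s, s < M j → g (vv j s) ≤ i := by
          intro s hs
          have h1 := hgub hj hs
          have h2 := hoffmono (j + 1) n (by omega)
          have h3 := hoff1 (j + 1)
          omega
        have htlt : (t + 1) % M j < M j := Nat.mod_lt _ (by have := hM3 j; omega)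
        rcases Sym2.eq_iff.mp hsym with ⟨h1, h2⟩ | ⟨h1, h2⟩
        · rw [h2] at hlt; exact absurd hlt (not_lt.mpr (hub _ htlt))
        · rw [h2] at hlt; exact absurd hlt (not_lt.mpr (hub _ ht))
      rw [hemp]
      simp
    · push_neg at hbig
      obtain ⟨j, hj, hi1, hi2⟩ : ∃ j, j < n ∧ off j - 1 ≤ i ∧ i < off (j + 1) - 1 := by
        have H0 : ∀ N, i < off N - 1 → ∃ j, j < N ∧ off j - 1 ≤ i ∧ i < off (j + 1) - 1 := by
          intro N
          induction N with
          | zero => intro hi0; simp only [hoffdef, Finset.sum_range_zero] at hi0; omega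
          | succ N ih =>
            intro hi0
            by_cases hN : i < off N - 1
            · obtain ⟨j, h1, h2, h3⟩ := ih hN
              exact ⟨j, by omega, h2, h3⟩
            · exact ⟨N, by omega, by omega, hi0⟩
        exact H0 n hbig
      have hMj := hM3 j
      set dpp := min (DD j) (M j - 1) with hdppd
      have hdpp1 : 1 ≤ dpp := le_min (hD1 hj) (by omega)
      have hdpp2 : dpp ≤ M j - 1 := min_le_right _ _
      have hmodlt : ∀ s : ℕ, (s + 1) % M j < M j := fun s => Nat.mod_lt _ (by omega)
      -- membership characterization
      have hmem : ∀ p : W × W, p ∈ {p : W × W | H.Adj p.1 p.2 ∧ g p.1 ≤ i ∧ i < g p.2} →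
          ∃ t, t < M j ∧
            ((t < dpp ∧ p.1 = vv j t ∧ p.2 = vv j ((t + 1) % M j) ∧
              posF (off j) (M j) (DD j) t ≤ i ∧ i < posF (off j) (M j) (DD j) (t + 1)) ∨
             (dpp ≤ t ∧ p.1 = vv j ((t + 1) % M j) ∧ p.2 = vv j t ∧
              posF (off j) (M j) (DD j) ((t + 1) % M j) ≤ i ∧
              i < posF (off j) (M j) (DD j) t)) := by
        intro p hp
        obtain ⟨hadjp, hle, hlt⟩ := hp
        obtain ⟨j', t, hj', ht, hsym⟩ := hadj _ _ hadjp
        have htlt : (t + 1) % M j' < M j' := Nat.mod_lt _ (by have := hM3 j'; omega)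
        have hend := Sym2.eq_iff.mp hsym
        have hj'j : j' = j := by
          have hub2 : g p.2 ≤ off (j' + 1) - 1 := by
            rcases hend with ⟨-, h2⟩ | ⟨-, h2⟩
            · rw [h2]; exact hgub hj' htlt
            · rw [h2]; exact hgub hj' ht
          have hlb1 : off j' - 1 ≤ g p.1 := by
            rcases hend with ⟨h1, -⟩ | ⟨h1, -⟩
            · rw [h1]; exact hglb hj' ht
            · rw [h1]; exact hglb hj' htlt
          have hA : j ≤ j' := by
            by_contra hcon
            push_neg at hcon
            have := hoffmono (j' + 1) j (by omega)
            have := hoff1 (j' + 1)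
            omega
          have hB : j' ≤ j := by
            by_contra hcon
            push_neg at hcon
            have := hoffmono (j + 1) j' (by omega)
            have := hoff1 (j + 1)
            omega
          omega
        subst hj'j
        refine ⟨t, ht, ?_⟩
        rcases hend with ⟨h1, h2⟩ | ⟨h1, h2⟩
        · left
          rw [h1, hkey hj' ht] at hle
          rw [h2, hkey hj' htlt] at hlt
          have htd : t < dpp := by
            by_contra hcon
            push_neg at hcon
            rcases Nat.lt_or_ge (t + 1) (M j') with hw | hw
            · rw [Nat.mod_eq_of_lt hw] at hlt
              have := posF_anti (hM3 j') (hD1 hj') (hD2 hj') (hoff1 j') hcon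
                (by omega : t < t + 1) (by omega)
              omega
            · have hmod : (t + 1) % M j' = 0 := by
                rw [show t + 1 = M j' by omega, Nat.mod_self]
              rw [hmod] at hlt
              have := posF_wrap (hM3 j') (hD1 hj') (hD2 hj') (hoff1 j')
                (show 1 ≤ t by omega) ht
              omega
          refine ⟨htd, h1, h2, hle, ?_⟩
          rwa [Nat.mod_eq_of_lt (by omega : t + 1 < M j')] at hlt
        · right
          rw [h1, hkey hj' htlt] at hle
          rw [h2, hkey hj' ht] at hlt
          have htd : dpp ≤ t := by
            by_contra hcon
            push_neg at hcon
            have hw : t + 1 < M j' := by omega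
            rw [Nat.mod_eq_of_lt hw] at hle
            have := posF_mono (hM3 j') (hD1 hj') (hD2 hj') (hoff1 j')
              (by omega : t < t + 1) (show t + 1 ≤ min (DD j') (M j' - 1) by omega)
            omega
          exact ⟨htd, h1, h2, hle, hlt⟩
      -- uniqueness of the ascending crossing edge
      have huasc : ∀ t t', t < dpp → t' < dpp →
          posF (off j) (M j) (DD j) t ≤ i → i < posF (off j) (M j) (DD j) (t + 1) →
          posF (off j) (M j) (DD j) t' ≤ i → i < posF (off j) (M j) (DD j) (t' + 1) →
          t = t' := by
        have step : ∀ s s', s' < dpp → s < s' →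
            posF (off j) (M j) (DD j) (s + 1) ≤ posF (off j) (M j) (DD j) s' := by
          intro s s' h2 hlt
          rcases Nat.lt_or_ge (s + 1) s' with hx | hx
          · exact le_of_lt (posF_mono (hM3 j) (hD1 hj) (hD2 hj) (hoff1 j) hx (by omega))
          · have : s + 1 = s' := by omega
            rw [this]
        intro t t' h1 h2 c1 c2 c3 c4
        by_contra hne
        rcases Nat.lt_or_ge t t' with hlt | hge
        · have := step t t' h2 hlt; omega
        · have := step t' t h1 (by omega); omega
      -- uniqueness of the descending crossing edge
      have hudesc : ∀ t t', t < M j → t' < M j → dpp ≤ t → dpp ≤ t' →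
          posF (off j) (M j) (DD j) ((t + 1) % M j) ≤ i → i < posF (off j) (M j) (DD j) t →
          posF (off j) (M j) (DD j) ((t' + 1) % M j) ≤ i → i < posF (off j) (M j) (DD j) t' →
          t = t' := by
        have step : ∀ s s', s < M j → s' < M j → dpp ≤ s → s < s' →
            posF (off j) (M j) (DD j) s' ≤ posF (off j) (M j) (DD j) ((s + 1) % M j) := by
          intro s s' hsM hs'M hds hlt
          have hw : s + 1 < M j := by omega
          rw [Nat.mod_eq_of_lt hw]
          rcases Nat.lt_or_ge (s + 1) s' with hx | hx
          · exact le_of_lt (posF_anti (hM3 j) (hD1 hj) (hD2 hj) (hoff1 j) (by omega) hx (by omega))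
          · have : s + 1 = s' := by omega
            rw [this]
        intro t t' htM ht'M h1 h2 c1 c2 c3 c4
        by_contra hne
        rcases Nat.lt_or_ge t t' with hlt | hge
        · have := step t t' htM ht'M h1 hlt; omega
        · have := step t' t ht'M htM h2 (by omega); omega
      -- a descending pair makes the ascending predicate false
      have hFdesc : ∀ (p : W × W) (t : ℕ), t < M j → dpp ≤ t →
          p.1 = vv j ((t + 1) % M j) → p.2 = vv j t →
          ¬ ∃ s, s < dpp ∧ p.1 = vv j s ∧ p.2 = vv j ((s + 1) % M j) := by
        rintro p t htM htd hp1 hp2 ⟨s, hs, hq1, hq2⟩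
        have hsM : s < M j := by omega
        have e1 : (t + 1) % M j = s := hvv_inj hj (hmodlt t) hsM (hp1.symm.trans hq1)
        have e2 : t = (s + 1) % M j := hvv_inj hj htM (hmodlt s) (hp2.symm.trans hq2)
        have hmod : (s + 1) % M j = s + 1 := Nat.mod_eq_of_lt (by omega)
        rw [hmod] at e2
        rw [e2] at e1
        rcases Nat.lt_or_ge (s + 2) (M j) with hx | hx
        · rw [Nat.mod_eq_of_lt hx] at e1; omega
        · have hx2 : s + 2 = M j ∨ s + 2 = M j + 1 := by omega
          rcases hx2 with hx2 | hx2
          · rw [hx2, Nat.mod_self] at e1; omega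
          · have : (M j + 1) % M j = 1 := by
              rw [Nat.add_comm, Nat.add_mod_right, Nat.mod_eq_of_lt (by omega)]
            rw [hx2, this] at e1
            omega
      apply ncard_le_two_of_inj _ (fun p : W × W =>
        decide (∃ s, s < dpp ∧ p.1 = vv j s ∧ p.2 = vv j ((s + 1) % M j)))
      intro p hp q hq hFeq
      obtain ⟨t, ht, hcp⟩ := hmem p hp
      obtain ⟨t', ht', hcq⟩ := hmem q hq
      simp only [decide_eq_decide] at hFeq
      rcases hcp with ⟨htd, hp1, hp2, c1, c2⟩ | ⟨htd, hp1, hp2, c1, c2⟩ <;>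
        rcases hcq with ⟨htd', hq1, hq2, c3, c4⟩ | ⟨htd', hq1, hq2, c3, c4⟩
      · have : t = t' := huasc t t' htd htd' c1 c2 c3 c4
        subst this
        exact Prod.ext (hp1.trans hq1.symm) (hp2.trans hq2.symm)
      · exfalso
        exact hFdesc q t' ht' htd' hq1 hq2 (hFeq.mp ⟨t, htd, hp1, hp2⟩)
      · exfalso
        exact hFdesc p t ht htd hp1 hp2 (hFeq.mpr ⟨t', htd', hq1, hq2⟩)
      · have : t = t' := hudesc t t' ht ht' htd htd' c1 c2 c3 c4
        subst this
        exact Prod.ext (hp1.trans hq1.symm) (hp2.trans hq2.symm)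
  exact reduceCW H g hginj hcross
end

section
/- Let G be a connected graph on vertex set {1,…,n} with n ≥ 2 such that for every i = 1,…,n−1 at most 2 edges (u,v) satisfy u ≤ i < v, and suppose the only separating vertices of G are 1 and n. Then every vertex of G has degree at most 2. -/
lemma ncard_aux {α β : Type} [Finite β] (s : Set α) (t : Set β) (f : α → β)
    (hinj : Function.Injective f) (hsub : f '' s ⊆ t) : s.ncard ≤ t.ncard := by
  calc s.ncard = (f '' s).ncard := (Set.ncard_image_of_injective _ hinj).symm
    _ ≤ t.ncard := Set.ncard_le_ncard hsub t.toFinite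

lemma ncard_aux2 {α β : Type} [Finite β] (s : Set α) (t : Set β) (f : α → β)
    (hinj : Function.Injective f) (hsub : f '' s ⊆ t) (e : β) (he : e ∈ t)
    (hem : e ∉ f '' s) : s.ncard + 1 ≤ t.ncard := by
  have hsub2 : insert e (f '' s) ⊆ t := Set.insert_subset he hsub
  calc s.ncard + 1 = (insert e (f '' s)).ncard := by
        rw [Set.ncard_insert_of_notMem hem (f '' s).toFinite,
          Set.ncard_image_of_injective _ hinj]
    _ ≤ t.ncard := Set.ncard_le_ncard hsub2 t.toFinite

/-- if the only separating vertices are `1` and `n`, then every vertex has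
degree at most 2. -/
theorem all_degrees_le_two {n : ℕ} (hn : 2 ≤ n) (G : SimpleGraph (Fin n))
    (hconn : G.Connected)
    (hcut : ∀ i : ℕ, crossCount G (Equiv.refl (Fin n)) i ≤ 2)
    (hsep : ∀ i : Fin n, Separating G i → (i : ℕ) = 0 ∨ (i : ℕ) = n - 1) :
    ∀ v : Fin n, (G.neighborSet v).ncard ≤ 2 := by
  intro v
  classical
  set S : ℕ → Set (Fin n × Fin n) :=
    fun i => {p : Fin n × Fin n | G.Adj p.1 p.2 ∧ (p.1 : ℕ) ≤ i ∧ i < (p.2 : ℕ)} with hS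
  have hcc : ∀ i : ℕ, (S i).ncard ≤ 2 := by
    intro i
    have := hcut i
    simpa [crossCount, hS] using this
  set B : Set (Fin n) := {u : Fin n | G.Adj u v ∧ (u : ℕ) < (v : ℕ)} with hB
  set A : Set (Fin n) := {w : Fin n | G.Adj v w ∧ (v : ℕ) < (w : ℕ)} with hA
  have hsplit : G.neighborSet v = B ∪ A := by
    ext w
    simp only [SimpleGraph.mem_neighborSet, Set.mem_union, Set.mem_setOf_eq, hB, hA]
    constructor
    · intro h
      rcases Nat.lt_trichotomy (w : ℕ) (v : ℕ) with h1 | h1 | h1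
      · exact Or.inl ⟨h.symm, h1⟩
      · exact absurd (Fin.ext h1) (G.ne_of_adj h).symm
      · exact Or.inr ⟨h, h1⟩
    · rintro (⟨h, _⟩ | ⟨h, _⟩)
      · exact h.symm
      · exact h
  have hdisj : Disjoint B A := by
    rw [Set.disjoint_left]
    rintro w ⟨_, h1⟩ ⟨_, h2⟩
    omega
  have hcard : (G.neighborSet v).ncard = B.ncard + A.ncard := by
    rw [hsplit, Set.ncard_union_eq hdisj B.toFinite A.toFinite]
  have hinjB : Function.Injective (fun u : Fin n => ((u, v) : Fin n × Fin n)) := by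
    intro a b h; exact ((Prod.mk.injEq _ _ _ _).mp h).1
  have hinjA : Function.Injective (fun w : Fin n => ((v, w) : Fin n × Fin n)) := by
    intro a b h; exact ((Prod.mk.injEq _ _ _ _).mp h).2
  rw [hcard]
  rcases Nat.eq_zero_or_pos (v : ℕ) with hv0 | hv0
  · -- v = 0 : B empty
    have hBe : B = ∅ := by
      ext u
      simp only [Set.mem_setOf_eq, hB, Set.mem_empty_iff_false, iff_false]
      rintro ⟨_, hlt⟩; omega
    have hAle : A.ncard ≤ 2 := by
      refine le_trans (ncard_aux A (S 0) _ hinjA ?_) (hcc 0)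
      rintro p ⟨w, ⟨hadj, hlt⟩, rfl⟩
      show G.Adj v w ∧ (v : ℕ) ≤ 0 ∧ 0 < (w : ℕ)
      exact ⟨hadj, by omega, by omega⟩
    simp [hBe, hAle]
  rcases Nat.lt_or_ge (v : ℕ) (n - 1) with hvn | hvn
  · -- interior vertex: not separating
    have hns : ¬ Separating G v := by
      intro hs
      rcases hsep v hs with h | h <;> omega
    rw [Separating, not_not] at hns
    obtain ⟨u₀, w₀, hadj₀, hu₀, hw₀⟩ := hns
    have hu₀' : (u₀ : ℕ) < (v : ℕ) := hu₀
    have hw₀' : (v : ℕ) < (w₀ : ℕ) := hw₀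
    have hBle : B.ncard + 1 ≤ 2 := by
      refine le_trans (ncard_aux2 B (S ((v : ℕ) - 1)) _ hinjB ?_ (u₀, w₀) ?_ ?_) (hcc _)
      · rintro p ⟨u, ⟨hadj, hlt⟩, rfl⟩
        show G.Adj u v ∧ (u : ℕ) ≤ (v : ℕ) - 1 ∧ (v : ℕ) - 1 < (v : ℕ)
        exact ⟨hadj, by omega, by omega⟩
      · show G.Adj u₀ w₀ ∧ (u₀ : ℕ) ≤ (v : ℕ) - 1 ∧ (v : ℕ) - 1 < (w₀ : ℕ)
        exact ⟨hadj₀, by omega, by omega⟩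
      · rintro ⟨u, _, heq⟩
        have : (v : ℕ) = (w₀ : ℕ) := congrArg (fun p : Fin n × Fin n => (p.2 : ℕ)) heq
        omega
    have hAle : A.ncard + 1 ≤ 2 := by
      refine le_trans (ncard_aux2 A (S (v : ℕ)) _ hinjA ?_ (u₀, w₀) ?_ ?_) (hcc _)
      · rintro p ⟨w, ⟨hadj, hlt⟩, rfl⟩
        show G.Adj v w ∧ (v : ℕ) ≤ (v : ℕ) ∧ (v : ℕ) < (w : ℕ)
        exact ⟨hadj, le_refl _, hlt⟩
      · show G.Adj u₀ w₀ ∧ (u₀ : ℕ) ≤ (v : ℕ) ∧ (v : ℕ) < (w₀ : ℕ)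
        exact ⟨hadj₀, by omega, by omega⟩
      · rintro ⟨w, _, heq⟩
        have : (v : ℕ) = (u₀ : ℕ) := congrArg (fun p : Fin n × Fin n => (p.1 : ℕ)) heq
        omega
    omega
  · -- v = n - 1 : A empty
    have hvtop : (v : ℕ) = n - 1 := by have := v.isLt; omega
    have hAe : A = ∅ := by
      ext w
      simp only [Set.mem_setOf_eq, hA, Set.mem_empty_iff_false, iff_false]
      rintro ⟨_, hlt⟩
      have := w.isLt
      omega
    have hBle : B.ncard ≤ 2 := by
      refine le_trans (ncard_aux B (S (n - 2)) _ hinjB ?_) (hcc _)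
      rintro p ⟨u, ⟨hadj, hlt⟩, rfl⟩
      show G.Adj u v ∧ (u : ℕ) ≤ n - 2 ∧ n - 2 < (v : ℕ)
      exact ⟨hadj, by omega, by omega⟩
    simp [hAe, hBle]
end
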